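/- arXiv:1703.06605 — 2 statements merged into one kernel-verified Lean document; each statement's English description precedes it below -/
import Mathlib

section
/- Let z ∈ ℂⁿ have all entries of unit modulus, W ∈ ℂ^{n×n} be Hermitian, σ ≥ 0, and C = zz* + σW. Suppose x ∈ ℂⁿ satisfies |xₖ| = 1 for all k, x is a global optimum of maximizing x*Cx over unit-modulus vectors, and choose its global phase so that z*x = |z*x|. Then ‖x - z‖₂ ≤ 4σ‖W‖₂/√n. -/
/-! Compare the objective at the optimum `x` with its value at the ground truth `z`:
`n² - |z*x|² ≤ σ (x*Wx - z*Wz)`. With the phase chosen so that `z*x = |z*x|`, one has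
`‖x - z‖² = 2(n - |z*x|)`, so the left side is at least `n ‖x - z‖² / 2`. Writing
`x*Wx - z*Wz = x*W(x - z) + (x - z)*Wz` bounds the right side by `2σ‖W‖₂ √n ‖x - z‖`. -/

noncomputable section

namespace PhaseSync

open Complex

variable {n : ℕ}

/-- Euclidean (ℓ²) norm on `Fin n → ℂ`. -/
def l2norm (v : Fin n → ℂ) : ℝ :=
  Real.sqrt (∑ k, ‖v k‖ ^ 2)

/-- Entrywise sup (ℓ∞) norm on `Fin n → ℂ`. -/
def linfnorm (v : Fin n → ℂ) : ℝ :=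
  ⨆ k, ‖v k‖

/-- Hermitian inner product `x*y = ∑ₖ conj(xₖ) yₖ`. -/
def herm (x y : Fin n → ℂ) : ℂ :=
  ∑ k, (starRingEnd ℂ) (x k) * y k

/-- Distance up to a global phase: `d₂(x,y) = inf_θ ‖x e^{iθ} - y‖₂`. -/
def d2 (x y : Fin n → ℂ) : ℝ :=
  ⨅ θ : ℝ, l2norm (fun k => Complex.exp (θ * Complex.I) * x k - y k)

/-- Sup-norm distance up to a global phase. -/
def dinf (x y : Fin n → ℂ) : ℝ :=
  ⨅ θ : ℝ, linfnorm (fun k => Complex.exp (θ * Complex.I) * x k - y k)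

/-- ℓ² operator (spectral) norm of a matrix. -/
def opNorm (A : Matrix (Fin n) (Fin n) ℂ) : ℝ :=
  ⨆ u : {u : Fin n → ℂ // l2norm u = 1}, l2norm (A.mulVec u)

/-- Entrywise projection to the unit circle (on nonzero entries). -/
def proj (v : Fin n → ℂ) : Fin n → ℂ :=
  fun k => v k / (‖v k‖ : ℂ)

/-- The rank-one matrix `z z*`. -/
def outer (z : Fin n → ℂ) : Matrix (Fin n) (Fin n) ℂ :=
  Matrix.of fun i j => z i * (starRingEnd ℂ) (z j)

/-- The operator `ℒ v = (z*v/n) z + (σ/n) W v`. -/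
def Lop (z : Fin n → ℂ) (σ : ℝ) (W : Matrix (Fin n) (Fin n) ℂ) (v : Fin n → ℂ) : Fin n → ℂ :=
  (herm z v / (n : ℂ)) • z + (σ / (n : ℝ)) • W.mulVec v

open Matrix WithLp

lemma l2norm_eq_norm_toLp (v : Fin n → ℂ) : l2norm v = ‖toLp 2 v‖ := by
  simp [l2norm, EuclideanSpace.norm_eq]

lemma l2norm_nonneg (v : Fin n → ℂ) : 0 ≤ l2norm v :=
  Real.sqrt_nonneg _

lemma l2norm_of_forall_norm_eq_one {v : Fin n → ℂ} (hv : ∀ k, ‖v k‖ = 1) :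
    l2norm v = Real.sqrt n := by
  simp [l2norm, hv]

lemma herm_eq_inner_toLp (x y : Fin n → ℂ) : herm x y = inner ℂ (toLp 2 x) (toLp 2 y) := by
  simp [herm, PiLp.inner_apply, mul_comm]

lemma herm_self (v : Fin n → ℂ) : herm v v = (l2norm v ^ 2 : ℝ) := by
  rw [herm_eq_inner_toLp, inner_self_eq_norm_sq_to_K, l2norm_eq_norm_toLp]
  norm_cast

lemma dotProduct_star_eq_herm (v w : Fin n → ℂ) : star v ⬝ᵥ w = herm v w :=
  rfl

lemma conj_herm (x y : Fin n → ℂ) : starRingEnd ℂ (herm x y) = herm y x := by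
  simp [herm, mul_comm]

lemma norm_herm_le (x y : Fin n → ℂ) : ‖herm x y‖ ≤ l2norm x * l2norm y := by
  rw [herm_eq_inner_toLp, l2norm_eq_norm_toLp, l2norm_eq_norm_toLp]
  exact norm_inner_le_norm _ _

lemma l2norm_sub_sq (x z : Fin n → ℂ) :
    l2norm (x - z) ^ 2 = l2norm x ^ 2 + l2norm z ^ 2 - 2 * (herm z x).re := by
  rw [l2norm_eq_norm_toLp, l2norm_eq_norm_toLp, l2norm_eq_norm_toLp, toLp_sub, norm_sub_rev,
    @norm_sub_sq ℂ, herm_eq_inner_toLp, RCLike.re_to_complex]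
  ring

lemma opNorm_nonneg (W : Matrix (Fin n) (Fin n) ℂ) : 0 ≤ opNorm W :=
  Real.iSup_nonneg fun _ => l2norm_nonneg _

lemma norm_toEuclideanCLM_le_opNorm (W : Matrix (Fin n) (Fin n) ℂ) :
    ‖toEuclideanCLM (𝕜 := ℂ) W‖ ≤ opNorm W := by
  have hbdd : BddAbove (Set.range fun u : {u : Fin n → ℂ // l2norm u = 1} => l2norm (W *ᵥ u)) :=
    ⟨‖toEuclideanCLM (𝕜 := ℂ) W‖, by
      rintro _ ⟨⟨u, hu⟩, rfl⟩
      have := (toEuclideanCLM (𝕜 := ℂ) W).le_opNorm (toLp 2 u)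
      rwa [toEuclideanCLM_toLp, ← l2norm_eq_norm_toLp, ← l2norm_eq_norm_toLp, hu, mul_one] at this⟩
  refine ContinuousLinearMap.opNorm_le_of_unit_norm (opNorm_nonneg W) fun u hu => ?_
  have hu' : l2norm (ofLp u) = 1 := by rwa [l2norm_eq_norm_toLp, toLp_ofLp]
  calc ‖toEuclideanCLM (𝕜 := ℂ) W u‖ = l2norm (W *ᵥ ofLp u) := by
        rw [l2norm_eq_norm_toLp, ← toEuclideanCLM_toLp, toLp_ofLp]
    _ ≤ opNorm W := le_ciSup hbdd ⟨ofLp u, hu'⟩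

lemma l2norm_mulVec_le (W : Matrix (Fin n) (Fin n) ℂ) (v : Fin n → ℂ) :
    l2norm (W *ᵥ v) ≤ opNorm W * l2norm v := by
  rw [l2norm_eq_norm_toLp, l2norm_eq_norm_toLp, ← toEuclideanCLM_toLp]
  exact ((toEuclideanCLM (𝕜 := ℂ) W).le_opNorm _).trans
    (mul_le_mul_of_nonneg_right (norm_toEuclideanCLM_le_opNorm W) (norm_nonneg _))

lemma outer_mulVec (z v : Fin n → ℂ) : outer z *ᵥ v = herm z v • z := by
  ext i
  simp [outer, mulVec, dotProduct, herm, Finset.mul_sum, mul_comm, mul_left_comm]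

lemma re_quadForm_outer_add_smul (z : Fin n → ℂ) (σ : ℝ) (W : Matrix (Fin n) (Fin n) ℂ)
    (v : Fin n → ℂ) :
    (star v ⬝ᵥ (outer z + σ • W) *ᵥ v).re = ‖herm z v‖ ^ 2 + σ * (herm v (W *ᵥ v)).re := by
  rw [add_mulVec, dotProduct_add, outer_mulVec, smul_mulVec, dotProduct_smul, dotProduct_smul,
    dotProduct_star_eq_herm, dotProduct_star_eq_herm, ← conj_herm z v, smul_eq_mul,
    Complex.mul_conj']
  simp [← Complex.ofReal_pow]

lemma re_herm_mulVec_sub_le (W : Matrix (Fin n) (Fin n) ℂ) (x z : Fin n → ℂ) :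
    (herm x (W *ᵥ x)).re - (herm z (W *ᵥ z)).re ≤
      opNorm W * (l2norm x + l2norm z) * l2norm (x - z) := by
  have hsplit : herm x (W *ᵥ x) - herm z (W *ᵥ z) =
      herm x (W *ᵥ (x - z)) + herm (x - z) (W *ᵥ z) := by
    simp only [herm, mulVec_sub, Pi.sub_apply, map_sub, mul_sub, sub_mul, Finset.sum_sub_distrib]
    ring
  have hbound (v w : Fin n → ℂ) : ‖herm v (W *ᵥ w)‖ ≤ l2norm v * (opNorm W * l2norm w) :=
    (norm_herm_le _ _).trans (mul_le_mul_of_nonneg_left (l2norm_mulVec_le W w) (l2norm_nonneg v))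
  calc (herm x (W *ᵥ x)).re - (herm z (W *ᵥ z)).re
      = (herm x (W *ᵥ (x - z)) + herm (x - z) (W *ᵥ z)).re := by rw [← Complex.sub_re, hsplit]
    _ ≤ ‖herm x (W *ᵥ (x - z))‖ + ‖herm (x - z) (W *ᵥ z)‖ :=
        (Complex.re_le_norm _).trans (norm_add_le _ _)
    _ ≤ l2norm x * (opNorm W * l2norm (x - z)) + l2norm (x - z) * (opNorm W * l2norm z) :=
        add_le_add (hbound _ _) (hbound _ _)
    _ = opNorm W * (l2norm x + l2norm z) * l2norm (x - z) := by ring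

lemma le_div_sqrt_of_mul_sq_le {c D : ℝ} (hn : 0 < n) (hc : 0 ≤ c)
    (h : n * D ^ 2 ≤ c * Real.sqrt n * D) : D ≤ c / Real.sqrt n := by
  have hs : 0 < Real.sqrt n := Real.sqrt_pos.2 (Nat.cast_pos.2 hn)
  have hsq : Real.sqrt n ^ 2 = n := Real.sq_sqrt (Nat.cast_nonneg n)
  rw [le_div_iff₀ hs]
  nlinarith

theorem stmt6_general (n : ℕ) (hn : 0 < n) (z : Fin n → ℂ) (hz : ∀ k, ‖z k‖ = 1)
    (W : Matrix (Fin n) (Fin n) ℂ) (σ : ℝ) (hσ : 0 ≤ σ)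
    (x : Fin n → ℂ) (hx : ∀ k, ‖x k‖ = 1)
    (hopt : ∀ v : Fin n → ℂ, (∀ k, ‖v k‖ = 1) →
      (dotProduct (star v) ((outer z + σ • W).mulVec v)).re ≤
        (dotProduct (star x) ((outer z + σ • W).mulVec x)).re)
    (hphase : herm z x = (‖herm z x‖ : ℂ)) :
    l2norm (x - z) ≤ 4 * σ * opNorm W / Real.sqrt n := by
  have hnorm_x := l2norm_of_forall_norm_eq_one hx
  have hnorm_z := l2norm_of_forall_norm_eq_one hz
  have hsq : Real.sqrt n ^ 2 = n := Real.sq_sqrt (Nat.cast_nonneg n)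
  have hzx_le : ‖herm z x‖ ≤ n := by
    simpa [hnorm_x, hnorm_z, ← sq, hsq] using norm_herm_le z x
  have hdist : l2norm (x - z) ^ 2 = 2 * n - 2 * ‖herm z x‖ := by
    rw [l2norm_sub_sq, hnorm_x, hnorm_z, hsq, congrArg Complex.re hphase, Complex.ofReal_re]
    ring
  have hzz : ‖herm z z‖ = n := by
    rw [herm_self, hnorm_z, hsq, Complex.norm_real, Real.norm_natCast]
  have hgain : (n : ℝ) ^ 2 - ‖herm z x‖ ^ 2 ≤
      σ * (opNorm W * (Real.sqrt n + Real.sqrt n) * l2norm (x - z)) := by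
    have hopt_z := hopt z hz
    rw [re_quadForm_outer_add_smul, re_quadForm_outer_add_smul, hzz] at hopt_z
    have hnoise := mul_le_mul_of_nonneg_left (re_herm_mulVec_sub_le W x z) hσ
    rw [hnorm_x, hnorm_z] at hnoise
    linarith
  have hloss : n * l2norm (x - z) ^ 2 ≤ 2 * ((n : ℝ) ^ 2 - ‖herm z x‖ ^ 2) := by
    rw [hdist]
    nlinarith [mul_nonneg (norm_nonneg (herm z x)) (sub_nonneg.2 hzx_le)]
  apply le_div_sqrt_of_mul_sq_le hn (by have := opNorm_nonneg W; positivity)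
  linarith

/-- deterministic ℓ₂ bound for a global optimum of the phase
synchronization problem, with global phase chosen so `z*x = |z*x|`. -/
theorem stmt6 (n : ℕ) (hn : 0 < n) (z : Fin n → ℂ) (hz : ∀ k, ‖z k‖ = 1)
    (W : Matrix (Fin n) (Fin n) ℂ) (hW : W.IsHermitian) (σ : ℝ) (hσ : 0 ≤ σ)
    (x : Fin n → ℂ) (hx : ∀ k, ‖x k‖ = 1)
    (hopt : ∀ v : Fin n → ℂ, (∀ k, ‖v k‖ = 1) →
      (dotProduct (star v) ((outer z + σ • W).mulVec v)).re ≤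
        (dotProduct (star x) ((outer z + σ • W).mulVec x)).re)
    (hphase : herm z x = (‖herm z x‖ : ℂ)) :
    l2norm (x - z) ≤ 4 * σ * opNorm W / Real.sqrt n :=
  stmt6_general n hn z hz W σ hσ x hx hopt hphase

end PhaseSync
end
end

section
/- Let x, y ∈ ℂⁿ with ‖x‖₂ = ‖y‖₂ = √n, z ∈ ℂⁿ with unit-modulus entries, ε ∈ (0, 1/2), d₂(x, z) ≤ ε√n, d₂(y, z) ≤ ε√n. Write x = az + √n·α and y = bz + √n·β with a, b ≥ 0 real, α*z = β*z = 0. Let θ achieve d₂(x, y) = ‖e^{iθ}x - y‖₂. Then |e^{iθ}a - b| ≤ 6ε ‖e^{iθ}α - β‖₂. -/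
/-!
Dividing by `√n`, the decompositions give `a² + ‖α‖² = b² + ‖β‖² = 1`, and the phase-distance
formula `d₂(x, y)² = ‖x‖² + ‖y‖² - 2 |y*x|` turns `d₂(x, z) ≤ ε√n` into `a ≥ 1 - ε²/2`, hence
`‖α‖ ≤ ε`, and likewise for `y`. Minimality of `θ` means that `e = e^{iθ}` makes
`e (y*x) = n e (ab + β*α)` a nonnegative real. Now `|ea - b|² = (a - b)² + ab |e - 1|²`.
The modulus part is controlled by `(a - b)(a + b) = ‖β‖² - ‖α‖²` and
`|‖α‖ - ‖β‖| ≤ ‖eα - β‖`; the phase part by `ab Im e = -Im(β* eα) = -Im(β* (eα - β))`,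
together with `Re e ≥ -1/2`, which makes `|e - 1| ≤ 2 |Im e|`.
-/

noncomputable section

namespace PhaseSync

open Complex

variable {n : ℕ}

open scoped InnerProductSpace ComplexOrder

section UnitCircle

variable {e : ℂ}

lemma re_sq_add_im_sq_of_norm_eq_one (he : ‖e‖ = 1) : e.re ^ 2 + e.im ^ 2 = 1 := by
  have h := Complex.sq_norm e
  rw [he, normSq_apply] at h
  linear_combination -h

lemma sq_norm_mul_ofReal_sub_ofReal (he : ‖e‖ = 1) (a b : ℝ) :
    ‖e * a - b‖ ^ 2 = (a - b) ^ 2 + a * b * ‖e - 1‖ ^ 2 := by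
  have h := re_sq_add_im_sq_of_norm_eq_one he
  simp only [Complex.sq_norm, normSq_apply, sub_re, sub_im, mul_re, mul_im, ofReal_re, ofReal_im,
    one_re, one_im]
  linear_combination (a ^ 2 - a * b) * h

lemma sq_norm_sub_one_le (he : ‖e‖ = 1) (hre : -1 / 2 ≤ e.re) : ‖e - 1‖ ^ 2 ≤ 4 * e.im ^ 2 := by
  have h := re_sq_add_im_sq_of_norm_eq_one he
  have hre1 : e.re ≤ 1 := by nlinarith
  simp only [Complex.sq_norm, normSq_apply, sub_re, sub_im, one_re, one_im]
  nlinarith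

lemma norm_mul_ofReal_sub_ofReal_le (he : ‖e‖ = 1) {a b δ : ℝ} (hab : 1 / 2 ≤ a * b)
    (hre : -1 / 2 ≤ e.re) (hdiff : |a - b| ≤ 2 * δ) (him : a * b * |e.im| ≤ δ) :
    ‖e * a - b‖ ≤ 4 * δ := by
  have hδ : 0 ≤ δ := by linarith [abs_nonneg (a - b)]
  have hdiff2 : (a - b) ^ 2 ≤ (2 * δ) ^ 2 := by
    rw [← sq_abs]
    exact pow_le_pow_left₀ (abs_nonneg _) hdiff 2
  have him2 : a * b * e.im ^ 2 ≤ 2 * δ ^ 2 := by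
    have : (a * b * |e.im|) ^ 2 ≤ δ ^ 2 := pow_le_pow_left₀ (by positivity) him 2
    rw [mul_pow, sq_abs] at this
    nlinarith [sq_nonneg e.im]
  refine le_of_pow_le_pow_left₀ two_ne_zero (by positivity) ?_
  rw [sq_norm_mul_ofReal_sub_ofReal he]
  nlinarith [sq_norm_sub_one_le he hre]

end UnitCircle

lemma abs_sub_le_add_mul_abs_sub {a b A B : ℝ} (hA : a ^ 2 + A ^ 2 = 1) (hB : b ^ 2 + B ^ 2 = 1)
    (hab : 1 ≤ a + b) (hA0 : 0 ≤ A) (hB0 : 0 ≤ B) : |a - b| ≤ (A + B) * |A - B| := by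
  calc |a - b| ≤ |a - b| * (a + b) := le_mul_of_one_le_right (abs_nonneg _) hab
    _ = |(a - b) * (a + b)| := by rw [abs_mul, abs_of_nonneg (by linarith : 0 ≤ a + b)]
    _ = |(A + B) * (A - B)| := by
      rw [← abs_neg]
      congr 1
      linear_combination hB - hA
    _ = (A + B) * |A - B| := by rw [abs_mul, abs_of_nonneg (by positivity : 0 ≤ A + B)]

section InnerProductSpace

variable {E : Type*} [NormedAddCommGroup E] [InnerProductSpace ℂ E]

def phaseDist (x y : E) : ℝ :=
  ⨅ θ : ℝ, ‖exp (θ * I) • x - y‖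

lemma norm_smul_sub_sq {c : ℂ} (hc : ‖c‖ = 1) (x y : E) :
    ‖c • x - y‖ ^ 2 = ‖x‖ ^ 2 + ‖y‖ ^ 2 - 2 * (c * ⟪y, x⟫_ℂ).re := by
  rw [@norm_sub_sq ℂ, norm_smul, hc, one_mul, inner_smul_left, ← inner_conj_symm,
    ← map_mul, RCLike.conj_re, RCLike.re_to_complex]
  ring

lemma exp_neg_arg_mul_I_mul (w : ℂ) : exp (↑(-arg w) * I) * w = ‖w‖ := by
  conv_lhs => rw [← norm_mul_exp_arg_mul_I w]
  rw [mul_left_comm, ← exp_add]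
  push_cast
  simp

lemma phaseDist_eq_norm (x y : E) :
    phaseDist x y = ‖exp (↑(-arg ⟪y, x⟫_ℂ) * I) • x - y‖ := by
  refine le_antisymm (ciInf_le ⟨0, ?_⟩ _) (le_ciInf fun θ => ?_)
  · rintro _ ⟨θ, rfl⟩
    exact norm_nonneg _
  refine le_of_pow_le_pow_left₀ two_ne_zero (norm_nonneg _) ?_
  rw [norm_smul_sub_sq (norm_exp_ofReal_mul_I _), norm_smul_sub_sq (norm_exp_ofReal_mul_I _),
    exp_neg_arg_mul_I_mul, ofReal_re]
  have := re_le_norm (exp (θ * I) * ⟪y, x⟫_ℂ)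
  rw [norm_mul, norm_exp_ofReal_mul_I, one_mul] at this
  linarith

lemma sq_phaseDist (x y : E) :
    phaseDist x y ^ 2 = ‖x‖ ^ 2 + ‖y‖ ^ 2 - 2 * ‖⟪y, x⟫_ℂ‖ := by
  rw [phaseDist_eq_norm, norm_smul_sub_sq (norm_exp_ofReal_mul_I _), exp_neg_arg_mul_I_mul,
    ofReal_re]

lemma phaseDist_nonneg (x y : E) : 0 ≤ phaseDist x y := by
  rw [phaseDist_eq_norm]
  exact norm_nonneg _

lemma exp_mul_inner_nonneg_of_norm_eq_phaseDist {x y : E} {θ : ℝ}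
    (hθ : ‖exp (θ * I) • x - y‖ = phaseDist x y) : 0 ≤ exp (θ * I) * ⟪y, x⟫_ℂ := by
  have h := congrArg (· ^ 2) hθ
  simp only [norm_smul_sub_sq (norm_exp_ofReal_mul_I _), sq_phaseDist] at h
  rw [← re_eq_norm, norm_mul, norm_exp_ofReal_mul_I, one_mul]
  linarith

lemma abs_im_inner_le_norm_mul_norm_sub (u v : E) : |(⟪u, v⟫_ℂ).im| ≤ ‖u‖ * ‖v - u‖ := by
  have him : (⟪u, v⟫_ℂ).im = (⟪u, v - u⟫_ℂ).im := by
    rw [inner_sub_right, sub_im, inner_self_eq_norm_sq_to_K, RCLike.ofReal_eq_complex_ofReal,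
      ← ofReal_pow, ofReal_im, sub_zero]
  rw [him]
  exact (abs_im_le_norm _).trans (norm_inner_le_norm u _)

variable {z α β : E} {r : ℝ}

lemma inner_smul_add_smul_of_inner_eq_zero (hz : ‖z‖ = r) (hαz : ⟪α, z⟫_ℂ = 0)
    (hβz : ⟪β, z⟫_ℂ = 0) (a b : ℝ) :
    ⟪(b : ℂ) • z + (r : ℂ) • β, (a : ℂ) • z + (r : ℂ) • α⟫_ℂ = r ^ 2 * (a * b + ⟪β, α⟫_ℂ) := by
  have hzα : ⟪z, α⟫_ℂ = 0 := by rw [← inner_conj_symm, hαz, map_zero]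
  simp only [inner_add_left, inner_add_right, inner_smul_left, inner_smul_right,
    inner_self_eq_norm_sq_to_K, RCLike.ofReal_eq_complex_ofReal, hz, hzα, hβz, conj_ofReal]
  ring

lemma inner_smul_add_smul_right_of_inner_eq_zero (hz : ‖z‖ = r) (hαz : ⟪α, z⟫_ℂ = 0) (a : ℝ) :
    ⟪z, (a : ℂ) • z + (r : ℂ) • α⟫_ℂ = a * r ^ 2 := by
  have hzα : ⟪z, α⟫_ℂ = 0 := by rw [← inner_conj_symm, hαz, map_zero]
  simp only [inner_add_right, inner_smul_right, inner_self_eq_norm_sq_to_K,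
    RCLike.ofReal_eq_complex_ofReal, hz, hzα]
  ring

lemma sq_add_norm_sq_eq_one (hr : 0 < r) (hz : ‖z‖ = r) (hαz : ⟪α, z⟫_ℂ = 0) {a : ℝ}
    (hx : ‖(a : ℂ) • z + (r : ℂ) • α‖ = r) : a ^ 2 + ‖α‖ ^ 2 = 1 := by
  have h := inner_smul_add_smul_of_inner_eq_zero hz hαz hαz a a
  rw [inner_self_eq_norm_sq_to_K, hx, inner_self_eq_norm_sq_to_K] at h
  have h' : r ^ 2 * (a ^ 2 + ‖α‖ ^ 2) = r ^ 2 * 1 := by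
    exact_mod_cast (by linear_combination -h : (r : ℂ) ^ 2 * (a ^ 2 + ‖α‖ ^ 2) = r ^ 2 * 1)
  exact mul_left_cancel₀ (by positivity) h'

lemma one_sub_le_of_phaseDist_le (hr : 0 < r) (hz : ‖z‖ = r) (hαz : ⟪α, z⟫_ℂ = 0) {a ε : ℝ}
    (ha : 0 ≤ a) (hx : ‖(a : ℂ) • z + (r : ℂ) • α‖ = r)
    (hxz : phaseDist ((a : ℂ) • z + (r : ℂ) • α) z ≤ ε * r) :
    1 - ε ^ 2 / 2 ≤ a := by
  have hdist : phaseDist ((a : ℂ) • z + (r : ℂ) • α) z ^ 2 = r ^ 2 * (2 - 2 * a) := by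
    rw [sq_phaseDist, inner_smul_add_smul_right_of_inner_eq_zero hz hαz, hx, hz, norm_mul,
      norm_pow, norm_real, norm_real, Real.norm_of_nonneg ha, Real.norm_of_nonneg hr.le]
    ring
  have hle : r ^ 2 * (2 - 2 * a) ≤ r ^ 2 * ε ^ 2 := by
    rw [← hdist, mul_comm, ← mul_pow]
    exact pow_le_pow_left₀ (phaseDist_nonneg _ _) hxz 2
  linarith [le_of_mul_le_mul_left hle (by positivity)]

lemma exp_mul_add_inner_nonneg_of_norm_eq_phaseDist (hr : 0 < r) (hz : ‖z‖ = r)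
    (hαz : ⟪α, z⟫_ℂ = 0) (hβz : ⟪β, z⟫_ℂ = 0) {a b θ : ℝ}
    (hθ : ‖exp (θ * I) • ((a : ℂ) • z + (r : ℂ) • α) - ((b : ℂ) • z + (r : ℂ) • β)‖ =
      phaseDist ((a : ℂ) • z + (r : ℂ) • α) ((b : ℂ) • z + (r : ℂ) • β)) :
    0 ≤ exp (θ * I) * ((a * b : ℝ) : ℂ) + ⟪β, exp (θ * I) • α⟫_ℂ := by
  have h := exp_mul_inner_nonneg_of_norm_eq_phaseDist hθ
  rw [inner_smul_add_smul_of_inner_eq_zero hz hαz hβz] at h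
  have hr2 : (0 : ℂ) ≤ ((r ^ 2)⁻¹ : ℝ) := by exact_mod_cast (by positivity : (0 : ℝ) ≤ (r ^ 2)⁻¹)
  convert mul_nonneg hr2 h using 1
  rw [inner_smul_right]
  push_cast
  field_simp

theorem norm_exp_mul_sub_le_of_phaseDist_le (hr : 0 < r) (hz : ‖z‖ = r)
    (hαz : ⟪α, z⟫_ℂ = 0) (hβz : ⟪β, z⟫_ℂ = 0) {a b ε θ : ℝ} (ha : 0 ≤ a) (hb : 0 ≤ b)
    (hε0 : 0 < ε) (hε : ε < 1 / 2)
    (hx : ‖(a : ℂ) • z + (r : ℂ) • α‖ = r) (hy : ‖(b : ℂ) • z + (r : ℂ) • β‖ = r)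
    (hxz : phaseDist ((a : ℂ) • z + (r : ℂ) • α) z ≤ ε * r)
    (hyz : phaseDist ((b : ℂ) • z + (r : ℂ) • β) z ≤ ε * r)
    (hθ : ‖exp (θ * I) • ((a : ℂ) • z + (r : ℂ) • α) - ((b : ℂ) • z + (r : ℂ) • β)‖ =
      phaseDist ((a : ℂ) • z + (r : ℂ) • α) ((b : ℂ) • z + (r : ℂ) • β)) :
    ‖exp (θ * I) * a - b‖ ≤ 6 * ε * ‖exp (θ * I) • α - β‖ := by
  set e := exp (θ * I)
  set D := ‖e • α - β‖
  have he : ‖e‖ = 1 := norm_exp_ofReal_mul_I θ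
  have hxunit := sq_add_norm_sq_eq_one hr hz hαz hx
  have hyunit := sq_add_norm_sq_eq_one hr hz hβz hy
  have haε := one_sub_le_of_phaseDist_le hr hz hαz ha hx hxz
  have hbε := one_sub_le_of_phaseDist_le hr hz hβz hb hy hyz
  have hαε : ‖α‖ ≤ ε := (abs_le_of_sq_le_sq' (by nlinarith) hε0.le).2
  have hβε : ‖β‖ ≤ ε := (abs_le_of_sq_le_sq' (by nlinarith) hε0.le).2
  have ha78 : 7 / 8 ≤ a := by nlinarith
  have hb78 : 7 / 8 ≤ b := by nlinarith
  have hab : 1 / 2 ≤ a * b := by nlinarith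
  have hinner : ‖⟪β, e • α⟫_ℂ‖ ≤ ‖β‖ * ‖α‖ := by
    simpa [norm_smul, he] using norm_inner_le_norm (𝕜 := ℂ) β (e • α)
  obtain ⟨hre, him⟩ :=
    Complex.nonneg_iff.mp (exp_mul_add_inner_nonneg_of_norm_eq_phaseDist hr hz hαz hβz hθ)
  rw [add_re, re_mul_ofReal] at hre
  rw [add_im, im_mul_ofReal] at him
  refine (norm_mul_ofReal_sub_ofReal_le he (δ := ε * D) hab ?_ ?_ ?_).trans
    (by nlinarith [norm_nonneg (e • α - β)])
  · -- `a b Re e ≥ -Re ⟪β, e α⟫ ≥ -‖β‖ ‖α‖ ≥ -ε²`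
    nlinarith [re_le_norm ⟪β, e • α⟫_ℂ, norm_nonneg α, norm_nonneg β]
  · have hαβ : |‖α‖ - ‖β‖| ≤ D := by
      simpa [norm_smul, he] using abs_norm_sub_norm_le (e • α) β
    calc |a - b| ≤ (‖α‖ + ‖β‖) * |‖α‖ - ‖β‖| :=
          abs_sub_le_add_mul_abs_sub hxunit hyunit (by linarith) (norm_nonneg _) (norm_nonneg _)
      _ ≤ 2 * ε * D := by gcongr; linarith
      _ = 2 * (ε * D) := by ring
  · calc a * b * |e.im| = |(⟪β, e • α⟫_ℂ).im| := by
          rw [(by linarith : (⟪β, e • α⟫_ℂ).im = -(e.im * (a * b))), abs_neg, abs_mul,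
            abs_of_nonneg (by positivity : 0 ≤ a * b), mul_comm]
      _ ≤ ‖β‖ * D := abs_im_inner_le_norm_mul_norm_sub β (e • α)
      _ ≤ ε * D := by gcongr

end InnerProductSpace

section EuclideanTransfer

lemma toLp_mul_sub (c : ℂ) (x y : Fin n → ℂ) :
    WithLp.toLp 2 (fun k => c * x k - y k) = c • WithLp.toLp 2 x - WithLp.toLp 2 y := rfl

lemma l2norm_eq_norm (v : Fin n → ℂ) : l2norm v = ‖WithLp.toLp 2 v‖ := by
  simp [l2norm, EuclideanSpace.norm_eq]

lemma herm_eq_inner (u v : Fin n → ℂ) : herm u v = ⟪WithLp.toLp 2 u, WithLp.toLp 2 v⟫_ℂ := by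
  simp [herm, PiLp.inner_apply, mul_comm]

lemma d2_eq_phaseDist (x y : Fin n → ℂ) :
    d2 x y = phaseDist (WithLp.toLp 2 x) (WithLp.toLp 2 y) := by
  simp only [d2, phaseDist, l2norm_eq_norm, toLp_mul_sub]

lemma toLp_smul_add_smul (a r : ℝ) (z α : Fin n → ℂ) :
    WithLp.toLp 2 ((a : ℂ) • z + r • α) =
      (a : ℂ) • WithLp.toLp 2 z + (r : ℂ) • WithLp.toLp 2 α := by
  simp [Complex.coe_smul]

end EuclideanTransfer

/-- key orthogonal-decomposition inequality. With `x = a z + √n α`,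
`y = b z + √n β`, `α, β ⊥ z`, and `θ` attaining `d₂(x,y)`,
one has `|e^{iθ} a - b| ≤ 6ε ‖e^{iθ}α - β‖₂`. -/
theorem stmt11 (n : ℕ) (hn : 0 < n) (z x y α β : Fin n → ℂ) (a b ε θ : ℝ)
    (hz : ∀ k, ‖z k‖ = 1)
    (hε0 : 0 < ε) (hε : ε < 1 / 2)
    (hxn : l2norm x = Real.sqrt n) (hyn : l2norm y = Real.sqrt n)
    (hxz : d2 x z ≤ ε * Real.sqrt n) (hyz : d2 y z ≤ ε * Real.sqrt n)
    (ha : 0 ≤ a) (hb : 0 ≤ b)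
    (hxdec : x = (a : ℂ) • z + (Real.sqrt n : ℝ) • α)
    (hydec : y = (b : ℂ) • z + (Real.sqrt n : ℝ) • β)
    (hαz : herm α z = 0) (hβz : herm β z = 0)
    (hθ : l2norm (fun k => Complex.exp (θ * Complex.I) * x k - y k) = d2 x y) :
    ‖Complex.exp (θ * Complex.I) * (a : ℂ) - (b : ℂ)‖ ≤
      6 * ε * l2norm (fun k => Complex.exp (θ * Complex.I) * α k - β k) := by
  have hz' : ‖WithLp.toLp 2 z‖ = √n := by simp [← l2norm_eq_norm, l2norm, hz]
  rw [herm_eq_inner] at hαz hβz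
  rw [d2_eq_phaseDist] at hxz hyz hθ
  rw [l2norm_eq_norm] at hxn hyn
  rw [l2norm_eq_norm, toLp_mul_sub] at hθ ⊢
  subst hxdec hydec
  rw [toLp_smul_add_smul] at hxn hyn hxz hyz hθ
  exact norm_exp_mul_sub_le_of_phaseDist_le (by positivity) hz' hαz hβz ha hb hε0 hε hxn hyn
    hxz hyz hθ

end PhaseSync
end
end
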